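/- Under the same variable-time algorithm setup, the positive history state w_+(i) = (e_→⊗|i⟩ + e_←⊗A|i⟩) ⊗ Σ_{t=0}^{T} (1/√α_t)·w^t(i) ⊗ |t⟩ is exactly orthogonal to every forward transition state e_→⊗|i⟩⊗(√α_t|a,z⟩|t⟩ - √α_{t+1}U_{t+1}^i|a,z⟩|t+1⟩) with z indexing H_{>t}, and likewise to every backward transition state. -/

import Mathlib

open Finset

noncomputable section

/-- The subroutine register space: answer register `A` times workspace `Z`. -/
abbrev Wsp (A Z : Type*) [Fintype A] [Fintype Z] := EuclideanSpace ℂ (A × Z)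

/-- Embed a subroutine-register vector `x` into the full space (direction
head `d ∈ {→ = 0, ← = 1}`, answer/workspace, time register), at time `t`. -/
def emb {A Z : Type*} [Fintype A] [Fintype Z] [DecidableEq A] [DecidableEq Z]
    (T : ℕ) (d : Fin 2) (t : ℕ) (x : Wsp A Z) :
    EuclideanSpace ℂ (Fin 2 × A × Z × Fin (T + 1)) :=
  WithLp.toLp 2 fun (p : Fin 2 × A × Z × Fin (T + 1)) => if p.1 = d ∧ (p.2.2.2 : ℕ) = t then x (p.2.1, p.2.2.1) else 0

/-- The orthogonal projection `Π_{≤t}` onto `H_t`, the span of basis states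
whose workspace component lies in a layer `≤ t`. -/
def layerProj {A Z : Type*} [Fintype A] [Fintype Z]
    (layer : Z → ℕ) (t : ℕ) (x : Wsp A Z) : Wsp A Z :=
  WithLp.toLp 2 fun az => if layer az.2 ≤ t then x az else 0

lemma inner_emb {A Z : Type*} [Fintype A] [Fintype Z] [DecidableEq A] [DecidableEq Z]
    (T : ℕ) (d d' : Fin 2) (t s : ℕ) (ht : t ≤ T) (x y : Wsp A Z) :
    (inner ℂ (emb T d t x) (emb T d' s y) : ℂ)
      = if d = d' ∧ t = s then (inner ℂ x y : ℂ) else 0 := by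
  classical
  simp only [emb, PiLp.inner_apply, RCLike.inner_apply]
  by_cases h : d = d' ∧ t = s
  · obtain ⟨rfl, rfl⟩ := h
    simp only [if_pos (And.intro rfl rfl)]
    have hmul : ∀ (c : Prop) [Decidable c] (u v : ℂ),
        (if c then u else 0) * (if c then v else 0) = if c then u * v else 0 := by
      intros c _ u v; split_ifs <;> simp
    have hτ : ∀ c : ℂ, (∑ τ : Fin (T+1), if (τ : ℕ) = t then c else 0) = c := by
      intro c
      rw [Finset.sum_eq_single (⟨t, Nat.lt_succ_of_le ht⟩ : Fin (T+1))]
      · simp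
      · intro τ _ hτ'
        have : (τ : ℕ) ≠ t := fun hc => hτ' (Fin.ext hc)
        simp [this]
      · simp
    simp only [Fintype.sum_prod_type]
    simp only [ite_and, apply_ite (starRingEnd ℂ), map_zero, hmul,
      Finset.sum_ite_irrel, Finset.sum_const_zero, hτ,
      Finset.sum_ite_eq', Finset.mem_univ, if_true]
  · rw [if_neg h]
    refine Finset.sum_eq_zero fun p _ => ?_
    by_cases h1 : p.1 = d ∧ (p.2.2.2 : ℕ) = t
    · by_cases h2 : p.1 = d' ∧ (p.2.2.2 : ℕ) = s
      · exact absurd ⟨h1.1 ▸ h2.1.symm ▸ rfl, h1.2 ▸ h2.2.symm ▸ rfl⟩ h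
      · simp [h2]
    · simp [h1]

lemma inner_emb_sum {A Z : Type*} [Fintype A] [Fintype Z] [DecidableEq A] [DecidableEq Z]
    (T : ℕ) (d : Fin 2) (t s : ℕ) (ht : t ≤ T) (x y : Wsp A Z) :
    (inner ℂ (emb T d t x) (emb T 0 s y + emb T 1 s y) : ℂ)
      = if t = s then (inner ℂ x y : ℂ) else 0 := by
  rw [inner_add_right, inner_emb T d 0 t s ht, inner_emb T d 1 t s ht]
  fin_cases d <;> simp

lemma key_orth {A Z : Type*} [Fintype A] [Fintype Z] [DecidableEq A] [DecidableEq Z]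
    (T : ℕ) (layer : Z → ℕ)
    (α : ℕ → ℝ) (hα : ∀ t, 0 < α t)
    (U : ℕ → Wsp A Z →L[ℂ] Wsp A Z)
    (hU : ∀ t (x y : Wsp A Z), (inner ℂ (U t x) (U t y) : ℂ) = inner ℂ x y)
    (w : ℕ → Wsp A Z)
    (hw : ∀ t, 1 ≤ t →
      w t = U t (w (t - 1) - layerProj layer (t - 1) (w (t - 1))))
    (t : ℕ) (ht : t < T) (a : A) (z : Z) (hz : t < layer z) (d : Fin 2) :
    (inner ℂ
        (emb T d t ((Real.sqrt (α t) : ℂ) • EuclideanSpace.single (a, z) (1 : ℂ))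
          - emb T d (t + 1)
              ((Real.sqrt (α (t + 1)) : ℂ) • U (t + 1) (EuclideanSpace.single (a, z) (1 : ℂ))))
        (∑ s ∈ Finset.range (T + 1),
          ((1 / Real.sqrt (α s) : ℝ) : ℂ) • (emb T 0 s (w s) + emb T 1 s (w s))) : ℂ) = 0 := by
  have htT : t ≤ T := le_of_lt ht
  have ht1 : t + 1 ≤ T := ht
  have expand : ∀ (tt : ℕ) (x : Wsp A Z), tt ≤ T →
      (inner ℂ (emb T d tt x)
        (∑ s ∈ Finset.range (T + 1),
          ((1 / Real.sqrt (α s) : ℝ) : ℂ) • (emb T 0 s (w s) + emb T 1 s (w s))) : ℂ)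
      = ((1 / Real.sqrt (α tt) : ℝ) : ℂ) * (inner ℂ x (w tt) : ℂ) := by
    intro tt x htt
    rw [inner_sum]
    simp only [inner_smul_right]
    rw [Finset.sum_eq_single tt]
    · rw [inner_emb_sum T d tt tt htt, if_pos rfl]
    · intro s hs hne
      rw [inner_emb_sum T d tt s htt, if_neg (fun hc => hne hc.symm), mul_zero]
    · intro h
      exact absurd (Finset.mem_range.2 (Nat.lt_succ_of_le htt)) h
  rw [inner_sub_left, expand t _ htT, expand (t + 1) _ ht1,
    inner_smul_left, inner_smul_left]
  have hc : ∀ s : ℕ,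
      ((1 / Real.sqrt (α s) : ℝ) : ℂ) * (starRingEnd ℂ) ((Real.sqrt (α s) : ℝ) : ℂ) = 1 := by
    intro s
    have h0 : Real.sqrt (α s) ≠ 0 := ne_of_gt (Real.sqrt_pos.2 (hα s))
    rw [Complex.conj_ofReal]
    push_cast
    field_simp
    exact div_self (Complex.ofReal_ne_zero.2 h0)
  have h1 : (inner ℂ (U (t + 1) (EuclideanSpace.single (a, z) (1 : ℂ))) (w (t + 1)) : ℂ)
      = inner ℂ (EuclideanSpace.single (a, z) (1 : ℂ)) (w t) := by
    rw [hw (t + 1) (Nat.le_add_left 1 t)]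
    simp only [Nat.add_sub_cancel]
    rw [hU, inner_sub_right]
    have h2 : (inner ℂ (EuclideanSpace.single (a, z) (1 : ℂ))
        (layerProj layer t (w t)) : ℂ) = 0 := by
      rw [EuclideanSpace.inner_single_left]
      simp [layerProj, not_le.2 hz]
    rw [h2, sub_zero]
  rw [← mul_assoc, ← mul_assoc, hc t, hc (t + 1), one_mul, one_mul, h1, sub_self]

/-- **Positive history states are orthogonal to forward and backward
transition states.** In the variable-time subroutine model (layers `H̄_t`
spanned by basis states with `layer z = t`, `1 ≤ layer z ≤ T`, unitaries
`U_t` fixing `H_{t-1}` pointwise, algorithm states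
`w t = U_t (Π_{≥t} w (t-1))`, `w 0 = ψ₀`), the positive history state
`w₊ = ∑_{s=0}^{T} (1/√α_s) (e_→ ⊗ w^s + e_← ⊗ w^s) ⊗ |s⟩`
is exactly orthogonal to every forward transition state
`e_→ ⊗ (√α_t |a,z⟩|t⟩ - √α_{t+1} U_{t+1}|a,z⟩|t+1⟩)` with `z` of layer `> t`,
and likewise to every backward transition state (head `e_←`). -/
theorem positive_history_orthogonal_to_transition_states
    {A Z : Type*} [Fintype A] [Fintype Z] [DecidableEq A] [DecidableEq Z]
    (T : ℕ) (layer : Z → ℕ) (hlayer : ∀ z, 1 ≤ layer z ∧ layer z ≤ T)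
    (α : ℕ → ℝ) (hα : ∀ t, 0 < α t) (hα0 : α 0 = 1)
    (U : ℕ → Wsp A Z →L[ℂ] Wsp A Z)
    (hU : ∀ t (x y : Wsp A Z), (inner ℂ (U t x) (U t y) : ℂ) = inner ℂ x y)
    (hUsurj : ∀ t, Function.Surjective (U t))
    (hUfix : ∀ t, 1 ≤ t → ∀ x : Wsp A Z,
      U t (layerProj layer (t - 1) x) = layerProj layer (t - 1) x)
    (ψ0 : Wsp A Z) (hψ0 : ‖ψ0‖ = 1)
    (w : ℕ → Wsp A Z) (hw0 : w 0 = ψ0)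
    (hw : ∀ t, 1 ≤ t →
      w t = U t (w (t - 1) - layerProj layer (t - 1) (w (t - 1))))
    (t : ℕ) (ht : t < T) (a : A) (z : Z) (hz : t < layer z) :
    (inner ℂ
        (emb T 0 t ((Real.sqrt (α t) : ℂ) • EuclideanSpace.single (a, z) (1 : ℂ))
          - emb T 0 (t + 1)
              ((Real.sqrt (α (t + 1)) : ℂ) • U (t + 1) (EuclideanSpace.single (a, z) (1 : ℂ))))
        (∑ s ∈ Finset.range (T + 1),
          ((1 / Real.sqrt (α s) : ℝ) : ℂ) • (emb T 0 s (w s) + emb T 1 s (w s))) : ℂ) = 0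
    ∧ (inner ℂ
        (emb T 1 t ((Real.sqrt (α t) : ℂ) • EuclideanSpace.single (a, z) (1 : ℂ))
          - emb T 1 (t + 1)
              ((Real.sqrt (α (t + 1)) : ℂ) • U (t + 1) (EuclideanSpace.single (a, z) (1 : ℂ))))
        (∑ s ∈ Finset.range (T + 1),
          ((1 / Real.sqrt (α s) : ℝ) : ℂ) • (emb T 0 s (w s) + emb T 1 s (w s))) : ℂ) = 0 := by
  exact ⟨key_orth T layer α hα U hU w hw t ht a z hz 0,
    key_orth T layer α hα U hU w hw t ht a z hz 1⟩

end
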